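/- arXiv:2504.21633 — 2 statements merged into one kernel-verified Lean document; each statement's English description precedes it below -/
import Mathlib

section
/- Let X₁,…,Xₙ be i.i.d. random variables with values in a measurable space, let A and B be disjoint measurable sets, and let 0 ≤ ℓ, ℓ' ≤ n be integers. Then the counts of observations in A and in B are negatively correlated in the sense that P(Σ_{i=1}^{n} 1_A(Xᵢ) ≤ ℓ and Σ_{i=1}^{n} 1_B(Xᵢ) ≤ ℓ') ≤ P(Σ_{i=1}^{n} 1_A(Xᵢ) ≤ ℓ) · P(Σ_{i=1}^{n} 1_B(Xᵢ) ≤ ℓ'). -/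
open MeasureTheory ProbabilityTheory Filter Set
open scoped ENNReal NNReal Classical

section Aux

variable {α : Type*} [MeasurableSpace α]

/-- count of coordinates landing in `A`. -/
noncomputable def cntS (A : Set α) {n : ℕ} (y : Fin n → α) : ℕ :=
  ∑ i, if y i ∈ A then 1 else 0

lemma ncard_eq_cntS (A : Set α) {n : ℕ} (y : Fin n → α) :
    Set.ncard {i : Fin n | y i ∈ A} = cntS A y := by
  classical
  rw [show {i : Fin n | y i ∈ A}.ncard = ({i : Fin n | y i ∈ A}.toFinset).card from
    Set.ncard_eq_toFinset_card' _, Set.toFinset_setOf, Finset.card_filter]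
  rfl

lemma measurable_cntS {A : Set α} (hA : MeasurableSet A) {n : ℕ} :
    Measurable (cntS A : (Fin n → α) → ℕ) := by
  apply Finset.measurable_sum
  intro i _
  exact Measurable.ite (measurable_pi_apply i hA) measurable_const measurable_const

lemma cntS_succ (A : Set α) {n : ℕ} (y : Fin (n + 1) → α) :
    cntS A y = (if y 0 ∈ A then 1 else 0) + cntS A (fun j => y j.succ) :=
  Fin.sum_univ_succ _

lemma pi_succ_apply (μ : Measure α) [IsProbabilityMeasure μ] {n : ℕ}
    (S : Set (α × (Fin n → α))) (hS : MeasurableSet S) :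
    (Measure.pi fun _ : Fin (n + 1) => μ) {x | (x 0, fun j => x j.succ) ∈ S} =
      (μ.prod (Measure.pi fun _ : Fin n => μ)) S := by
  have mp := measurePreserving_piFinSuccAbove (fun _ : Fin (n + 1) => μ) 0
  have he : {x : Fin (n + 1) → α | (x 0, fun j => x j.succ) ∈ S} =
      (MeasurableEquiv.piFinSuccAbove (fun _ : Fin (n + 1) => α) 0) ⁻¹' S := by
    ext x
    simp only [MeasurableEquiv.piFinSuccAbove, Fin.zero_succAbove, Set.mem_preimage,
      Set.mem_setOf_eq, MeasurableEquiv.coe_mk, Equiv.coe_fn_mk, Equiv.coe_fn_symm_mk,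
      Fin.insertNthEquiv, Fin.insertNth_zero]
    rfl
  rw [he, mp.measure_preimage hS.nullMeasurableSet]

lemma neg_corr_pi (μ : Measure α) [IsProbabilityMeasure μ]
    {A B : Set α} (hA : MeasurableSet A) (hB : MeasurableSet B) (hAB : Disjoint A B) :
    ∀ (n l l' : ℕ),
      (Measure.pi fun _ : Fin n => μ) {y | cntS A y ≤ l ∧ cntS B y ≤ l'} ≤
        (Measure.pi fun _ : Fin n => μ) {y | cntS A y ≤ l} *
          (Measure.pi fun _ : Fin n => μ) {y | cntS B y ≤ l'} := by
  intro n
  induction n with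
  | zero =>
    intro l l'
    have h0 : ∀ (C : Set α) (y : Fin 0 → α), cntS C y = 0 := by
      intro C y; simp [cntS]
    simp [h0, measure_univ]
  | succ n ih =>
    intro l l'
    set π := (Measure.pi fun _ : Fin n => μ) with hπ
    -- measurability of the basic events
    have mev : ∀ {C : Set α}, MeasurableSet C → ∀ (s : Set ℕ),
        MeasurableSet {y : Fin n → α | cntS C y ∈ s} := by
      intro C hC s
      exact measurable_cntS hC MeasurableSet.of_discrete
    have mevA : ∀ (c : ℕ), MeasurableSet {y : Fin n → α | c + cntS A y ≤ l} := fun c =>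
      mev hA {k | c + k ≤ l}
    have mevB : ∀ (c : ℕ), MeasurableSet {y : Fin n → α | c + cntS B y ≤ l'} := fun c =>
      mev hB {k | c + k ≤ l'}
    have mevAB : ∀ (c c' : ℕ),
        MeasurableSet {y : Fin n → α | c + cntS A y ≤ l ∧ c' + cntS B y ≤ l'} := fun c c' =>
      (mevA c).inter (mevB c')
    -- abbreviations
    set p := μ A with hp
    set q := μ B with hq
    set r := μ (A ∪ B)ᶜ with hr
    set G0 := π {y | cntS A y ≤ l} with hG0
    set G1 := π {y | 1 + cntS A y ≤ l} with hG1
    set H0 := π {y | cntS B y ≤ l'} with hH0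
    set H1 := π {y | 1 + cntS B y ≤ l'} with hH1
    have hpqr : p + q + r = 1 := by
      rw [hp, hq, hr, ← measure_union hAB hB,
        measure_add_measure_compl (hA.union hB), measure_univ]
    -- rewrite every event on `Fin (n+1)` via the first coordinate
    have hrwA : ∀ (x : Fin (n + 1) → α),
        cntS A x = (if x 0 ∈ A then 1 else 0) + cntS A (fun j => x j.succ) := cntS_succ A
    have hrwB : ∀ (x : Fin (n + 1) → α),
        cntS B x = (if x 0 ∈ B then 1 else 0) + cntS B (fun j => x j.succ) := cntS_succ B
    -- the three decompositions
    have hF : (Measure.pi fun _ : Fin (n + 1) => μ) {x | cntS A x ≤ l ∧ cntS B x ≤ l'} =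
        p * π {y | 1 + cntS A y ≤ l ∧ cntS B y ≤ l'} +
          (q * π {y | cntS A y ≤ l ∧ 1 + cntS B y ≤ l'} +
            r * π {y | cntS A y ≤ l ∧ cntS B y ≤ l'}) := by
      have hset : {x : Fin (n + 1) → α | cntS A x ≤ l ∧ cntS B x ≤ l'} =
          {x | (x 0, fun j => x j.succ) ∈
            (A ×ˢ {y | 1 + cntS A y ≤ l ∧ 0 + cntS B y ≤ l'} ∪
              (B ×ˢ {y | 0 + cntS A y ≤ l ∧ 1 + cntS B y ≤ l'} ∪
                (A ∪ B)ᶜ ×ˢ {y | 0 + cntS A y ≤ l ∧ 0 + cntS B y ≤ l'}))} := by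
        ext x
        have ha' := hrwA x
        have hb' := hrwB x
        by_cases ha : x 0 ∈ A
        · have hb : x 0 ∉ B := disjoint_left.mp hAB ha
          simp [ha', hb', ha, hb]
        · by_cases hb : x 0 ∈ B
          · simp [ha', hb', ha, hb]
          · simp [ha', hb', ha, hb]
      rw [hset, pi_succ_apply μ _ ((hA.prod (mevAB 1 0)).union
        ((hB.prod (mevAB 0 1)).union (((hA.union hB).compl).prod (mevAB 0 0))))]
      rw [measure_union ?hd1 ((hB.prod (mevAB 0 1)).union
        (((hA.union hB).compl).prod (mevAB 0 0)))]
      case hd1 =>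
        refine Set.disjoint_left.mpr fun z hz hz' => ?_
        rcases hz' with h | h
        · exact disjoint_left.mp hAB hz.1 h.1
        · exact h.1 (Or.inl hz.1)
      rw [measure_union ?hd2 (((hA.union hB).compl).prod (mevAB 0 0))]
      case hd2 =>
        refine Set.disjoint_left.mpr fun z hz hz' => hz'.1 (Or.inr hz.1)
      rw [Measure.prod_prod, Measure.prod_prod, Measure.prod_prod]
      simp only [zero_add]
      rfl
    have hG : (Measure.pi fun _ : Fin (n + 1) => μ) {x | cntS A x ≤ l} =
        p * G1 + (q + r) * G0 := by
      have hset : {x : Fin (n + 1) → α | cntS A x ≤ l} =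
          {x | (x 0, fun j => x j.succ) ∈
            (A ×ˢ {y | 1 + cntS A y ≤ l} ∪ Aᶜ ×ˢ {y | 0 + cntS A y ≤ l})} := by
        ext x
        have ha' := hrwA x
        by_cases ha : x 0 ∈ A <;> simp [ha', ha]
      have hAc : μ Aᶜ = q + r := by
        have hacc : Aᶜ = B ∪ (A ∪ B)ᶜ := by
          ext a
          by_cases hb : a ∈ B
          · simp [hb, disjoint_right.mp hAB hb]
          · simp [hb]
        rw [hacc, measure_union ?hd3 ((hA.union hB).compl)]
        case hd3 =>
          exact Set.disjoint_left.mpr fun a haB haC => haC (Or.inr haB)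
      rw [hset, pi_succ_apply μ _ ((hA.prod (mevA 1)).union (hA.compl.prod (mevA 0)))]
      rw [measure_union ?hd4 (hA.compl.prod (mevA 0))]
      case hd4 =>
        exact Set.disjoint_left.mpr fun z hz hz' => hz'.1 hz.1
      rw [Measure.prod_prod, Measure.prod_prod, hAc]
      simp only [zero_add]
      rfl
    have hH : (Measure.pi fun _ : Fin (n + 1) => μ) {x | cntS B x ≤ l'} =
        q * H1 + (p + r) * H0 := by
      have hset : {x : Fin (n + 1) → α | cntS B x ≤ l'} =
          {x | (x 0, fun j => x j.succ) ∈
            (B ×ˢ {y | 1 + cntS B y ≤ l'} ∪ Bᶜ ×ˢ {y | 0 + cntS B y ≤ l'})} := by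
        ext x
        have hb' := hrwB x
        by_cases hb : x 0 ∈ B <;> simp [hb', hb]
      have hBc : μ Bᶜ = p + r := by
        have hbcc : Bᶜ = A ∪ (A ∪ B)ᶜ := by
          ext a
          by_cases ha : a ∈ A
          · simp [ha, disjoint_left.mp hAB ha]
          · simp [ha]
        rw [hbcc, measure_union ?hd5 ((hA.union hB).compl)]
        case hd5 =>
          exact Set.disjoint_left.mpr fun a haA haC => haC (Or.inl haA)
      rw [hset, pi_succ_apply μ _ ((hB.prod (mevB 1)).union (hB.compl.prod (mevB 0)))]
      rw [measure_union ?hd6 (hB.compl.prod (mevB 0))]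
      case hd6 =>
        exact Set.disjoint_left.mpr fun z hz hz' => hz'.1 hz.1
      rw [Measure.prod_prod, Measure.prod_prod, hBc]
      simp only [zero_add]
      rfl
    -- bounds from the inductive hypothesis
    have hF10 : π {y | 1 + cntS A y ≤ l ∧ cntS B y ≤ l'} ≤ G1 * H0 := by
      rcases l with _ | m
      · have : {y : Fin n → α | 1 + cntS A y ≤ 0 ∧ cntS B y ≤ l'} = ∅ := by
          ext y; simp
        rw [this]; simp
      · have e1 : {y : Fin n → α | 1 + cntS A y ≤ m + 1 ∧ cntS B y ≤ l'} =
            {y | cntS A y ≤ m ∧ cntS B y ≤ l'} := by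
          ext y; simp [Nat.add_comm 1, Nat.succ_le_succ_iff]
        have e2 : {y : Fin n → α | 1 + cntS A y ≤ m + 1} = {y | cntS A y ≤ m} := by
          ext y; simp [Nat.add_comm 1, Nat.succ_le_succ_iff]
        rw [hG1, e1, e2]
        exact ih m l'
    have hF01 : π {y | cntS A y ≤ l ∧ 1 + cntS B y ≤ l'} ≤ G0 * H1 := by
      rcases l' with _ | m
      · have : {y : Fin n → α | cntS A y ≤ l ∧ 1 + cntS B y ≤ 0} = ∅ := by
          ext y; simp
        rw [this]; simp
      · have e1 : {y : Fin n → α | cntS A y ≤ l ∧ 1 + cntS B y ≤ m + 1} =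
            {y | cntS A y ≤ l ∧ cntS B y ≤ m} := by
          ext y; simp [Nat.add_comm 1, Nat.succ_le_succ_iff]
        have e2 : {y : Fin n → α | 1 + cntS B y ≤ m + 1} = {y | cntS B y ≤ m} := by
          ext y; simp [Nat.add_comm 1, Nat.succ_le_succ_iff]
        rw [hH1, e1, e2]
        exact ih l m
    have hF00 : π {y | cntS A y ≤ l ∧ cntS B y ≤ l'} ≤ G0 * H0 := ih l l'
    have hG10 : G1 ≤ G0 := by
      apply measure_mono
      intro y hy
      exact le_trans (Nat.le_add_left _ 1) hy
    have hH10 : H1 ≤ H0 := by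
      apply measure_mono
      intro y hy
      exact le_trans (Nat.le_add_left _ 1) hy
    -- the key correlation inequality
    obtain ⟨g, hg⟩ := exists_add_of_le hG10
    obtain ⟨h, hh⟩ := exists_add_of_le hH10
    have key : G1 * H0 + G0 * H1 ≤ G1 * H1 + G0 * H0 := by
      rw [hg, hh]
      have : G1 * H1 + (G1 + g) * (H1 + h) = G1 * (H1 + h) + (G1 + g) * H1 + g * h := by
        ring
      rw [this]
      exact le_add_right le_rfl
    -- putting everything together
    rw [hF, hG, hH]
    calc p * π {y | 1 + cntS A y ≤ l ∧ cntS B y ≤ l'} +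
          (q * π {y | cntS A y ≤ l ∧ 1 + cntS B y ≤ l'} +
            r * π {y | cntS A y ≤ l ∧ cntS B y ≤ l'})
        ≤ p * (G1 * H0) + (q * (G0 * H1) + r * (G0 * H0)) := by gcongr
      _ = (p + q + r) * (p * (G1 * H0) + (q * (G0 * H1) + r * (G0 * H0))) := by
          rw [hpqr, one_mul]
      _ = p * q * (G1 * H0 + G0 * H1) +
            (p * p * (G1 * H0) + p * r * (G1 * H0) + q * q * (G0 * H1) + q * r * (G0 * H1) +
              p * r * (G0 * H0) + q * r * (G0 * H0) + r * r * (G0 * H0)) := by ring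
      _ ≤ p * q * (G1 * H1 + G0 * H0) +
            (p * p * (G1 * H0) + p * r * (G1 * H0) + q * q * (G0 * H1) + q * r * (G0 * H1) +
              p * r * (G0 * H0) + q * r * (G0 * H0) + r * r * (G0 * H0)) := by
          exact add_le_add_left (mul_le_mul_right key _) _
      _ = (p * G1 + (q + r) * G0) * (q * H1 + (p + r) * H0) := by ring

end Aux

/-- Lemma 8, negative correlation: for i.i.d. random variables `X₁,…,Xₙ` and
disjoint measurable sets `A`, `B`, the counts of observations in `A` and in `B` are negatively
correlated. -/
theorem statement18 {Ω α : Type*} [MeasureSpace Ω] [IsProbabilityMeasure (ℙ : Measure Ω)]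
    [MeasurableSpace α]
    {n : ℕ} (X : Fin n → Ω → α) (hXm : ∀ i, Measurable (X i))
    (hiid : iIndepFun X ℙ)
    (hlaw : ∀ i j, Measure.map (X i) ℙ = Measure.map (X j) ℙ)
    (A B : Set α) (hA : MeasurableSet A) (hB : MeasurableSet B) (hAB : Disjoint A B)
    (l l' : ℕ) (hl : l ≤ n) (hl' : l' ≤ n) :
    ℙ {ω | Set.ncard {i : Fin n | X i ω ∈ A} ≤ l ∧ Set.ncard {i : Fin n | X i ω ∈ B} ≤ l'} ≤
      ℙ {ω | Set.ncard {i : Fin n | X i ω ∈ A} ≤ l} *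
        ℙ {ω | Set.ncard {i : Fin n | X i ω ∈ B} ≤ l'} := by
  rcases Nat.eq_zero_or_pos n with rfl | hn
  · have h0 : ∀ (C : Set α) (m : ℕ),
        {ω : Ω | Set.ncard {i : Fin 0 | X i ω ∈ C} ≤ m} = Set.univ := by
      intro C m
      ext ω
      simp [Set.eq_empty_of_isEmpty {i : Fin 0 | X i ω ∈ C}]
    have h0' : {ω : Ω | Set.ncard {i : Fin 0 | X i ω ∈ A} ≤ l ∧
        Set.ncard {i : Fin 0 | X i ω ∈ B} ≤ l'} = Set.univ := by
      ext ω
      simp [Set.eq_empty_of_isEmpty {i : Fin 0 | X i ω ∈ A},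
        Set.eq_empty_of_isEmpty {i : Fin 0 | X i ω ∈ B}]
    rw [h0 A l, h0 B l', h0', measure_univ, one_mul]
  · set i0 : Fin n := ⟨0, hn⟩ with hi0
    set μ : Measure α := Measure.map (X i0) ℙ with hμ
    haveI : IsProbabilityMeasure μ := Measure.isProbabilityMeasure_map (hXm i0).aemeasurable
    set Φ : Ω → (Fin n → α) := fun ω i => X i ω with hΦdef
    have hΦ : Measurable Φ := measurable_pi_lambda _ hXm
    have hmap : Measure.map Φ ℙ = Measure.pi (fun _ : Fin n => μ) := by
      refine (Measure.pi_eq fun s hs => ?_).symm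
      rw [Measure.map_apply hΦ (MeasurableSet.univ_pi hs)]
      have hpre : Φ ⁻¹' (Set.pi Set.univ s) = ⋂ i ∈ (Finset.univ : Finset (Fin n)),
          X i ⁻¹' s i := by
        ext ω
        simp [Φ, Set.mem_pi]
      rw [hpre, hiid.measure_inter_preimage_eq_mul Finset.univ (fun i _ => hs i)]
      refine Finset.prod_congr rfl fun i _ => ?_
      rw [← Measure.map_apply (hXm i) (hs i), hlaw i i0]
    have hev : ∀ {C : Set α}, MeasurableSet C → ∀ (m : ℕ),
        ℙ {ω | Set.ncard {i : Fin n | X i ω ∈ C} ≤ m} =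
          (Measure.pi fun _ : Fin n => μ) {y | cntS C y ≤ m} := by
      intro C hC m
      have hset : {ω | Set.ncard {i : Fin n | X i ω ∈ C} ≤ m} =
          Φ ⁻¹' {y | cntS C y ≤ m} := by
        ext ω
        simp only [Set.mem_setOf_eq, Set.mem_preimage, ncard_eq_cntS]
        rfl
      rw [hset, ← Measure.map_apply hΦ
        (show MeasurableSet {y : Fin n → α | cntS C y ≤ m} from measurable_cntS hC (MeasurableSet.of_discrete (s := {k : ℕ | k ≤ m}))),
        hmap]
    have hev2 : ℙ {ω | Set.ncard {i : Fin n | X i ω ∈ A} ≤ l ∧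
          Set.ncard {i : Fin n | X i ω ∈ B} ≤ l'} =
        (Measure.pi fun _ : Fin n => μ) {y | cntS A y ≤ l ∧ cntS B y ≤ l'} := by
      have hset : {ω | Set.ncard {i : Fin n | X i ω ∈ A} ≤ l ∧
            Set.ncard {i : Fin n | X i ω ∈ B} ≤ l'} =
          Φ ⁻¹' {y | cntS A y ≤ l ∧ cntS B y ≤ l'} := by
        ext ω
        simp only [Set.mem_setOf_eq, Set.mem_preimage, ncard_eq_cntS]
        rfl
      rw [hset, ← Measure.map_apply hΦ
        (show MeasurableSet {y : Fin n → α | cntS A y ≤ l ∧ cntS B y ≤ l'} from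
          MeasurableSet.inter
            (measurable_cntS hA (MeasurableSet.of_discrete (s := {k : ℕ | k ≤ l})))
            (measurable_cntS hB (MeasurableSet.of_discrete (s := {k : ℕ | k ≤ l'})))),
        hmap]
    rw [hev hA l, hev hB l', hev2]
    exact neg_corr_pi μ hA hB hAB n l l'
end

section
/- Let Z₁,…,Z_ν be independent positive random variables and suppose there exist C > 0 and b ∈ (0,1) such that P(Zⱼ ≤ ε) ≤ C·ε^b for all 1 ≤ j ≤ ν and all ε > 0. Then for all ε > 0, P(Σ_{j=1}^{ν} Zⱼ ≤ ε) ≤ ν⁻¹ · Γ(b) · (Γ(1+b)^{ν−1} / Γ(bν)) · (C·ε^b)^ν, where Γ is Euler's Gamma function. -/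
open MeasureTheory ProbabilityTheory Filter Set
open scoped ENNReal NNReal Classical


lemma betaIntegrable {p q ε : ℝ} (hp : 0 < p) (hq : 0 < q) (hε : 0 < ε) :
    IntervalIntegrable (fun x : ℝ => x ^ (p - 1) * (ε - x) ^ (q - 1)) volume 0 ε := by
  have h2 : (0:ℝ) < ε / 2 := by linarith
  have hA : IntervalIntegrable (fun x : ℝ => x ^ (p - 1) * (ε - x) ^ (q - 1)) volume 0 (ε/2) := by
    refine (intervalIntegral.intervalIntegrable_rpow' (by linarith)).mul_continuousOn ?_
    have : Set.uIcc (0:ℝ) (ε/2) = Set.Icc 0 (ε/2) := Set.uIcc_of_le h2.le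
    rw [this]
    refine (continuousOn_const.sub continuousOn_id).rpow_const fun x hx => Or.inl ?_
    have := hx.2
    simp only [Pi.sub_apply, id] at *
    intro h; nlinarith [hx.1, hx.2]
  have hB : IntervalIntegrable (fun x : ℝ => x ^ (p - 1) * (ε - x) ^ (q - 1)) volume (ε/2) ε := by
    have hint : IntervalIntegrable (fun x : ℝ => (ε - x) ^ (q - 1)) volume (ε/2) ε := by
      have := (intervalIntegral.intervalIntegrable_rpow' (a := 0) (b := ε/2) (r := q - 1)
        (by linarith)).comp_sub_left ε
      simpa [show ε - ε/2 = ε/2 by ring] using this.symm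
    refine hint.continuousOn_mul ?_
    have : Set.uIcc (ε/2) ε = Set.Icc (ε/2) ε := Set.uIcc_of_le (by linarith)
    rw [this]
    refine continuousOn_id.rpow_const fun x hx => Or.inl ?_
    simp only [id]; intro h; nlinarith [hx.1, hx.2]
  exact hA.trans hB

lemma betaValue {p q ε : ℝ} (hp : 0 < p) (hq : 0 < q) (hε : 0 < ε) :
    ∫ x in (0:ℝ)..ε, x ^ (p - 1) * (ε - x) ^ (q - 1) =
      ε ^ (p + q - 1) * (Real.Gamma p * Real.Gamma q / Real.Gamma (p + q)) := by
  have hsc := Complex.betaIntegral_scaled (p : ℂ) (q : ℂ) hε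
  have hbeta : Complex.betaIntegral p q =
      Complex.Gamma p * Complex.Gamma q / Complex.Gamma (p + q) := by
    have hg := Complex.Gamma_mul_Gamma_eq_betaIntegral (s := (p:ℂ)) (t := (q:ℂ))
      (by simpa using hp) (by simpa using hq)
    have hne : Complex.Gamma ((p:ℂ) + q) ≠ 0 := by
      rw [show ((p:ℂ) + q) = ((p + q : ℝ) : ℂ) by push_cast; ring, Complex.Gamma_ofReal]
      exact_mod_cast (Real.Gamma_pos_of_pos (by linarith)).ne'
    field_simp [hg]
    rw [hg]; ring
  have hlhs : (∫ x in (0:ℝ)..ε, (x:ℂ) ^ ((p:ℂ) - 1) * ((ε:ℂ) - x) ^ ((q:ℂ) - 1)) =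
      ((∫ x in (0:ℝ)..ε, x ^ (p - 1) * (ε - x) ^ (q - 1) : ℝ) : ℂ) := by
    rw [← intervalIntegral.integral_ofReal]
    refine intervalIntegral.integral_congr fun x hx => ?_
    rw [Set.uIcc_of_le hε.le] at hx
    push_cast
    rw [Complex.ofReal_cpow hx.1 (p-1), Complex.ofReal_cpow (show (0:ℝ) ≤ ε - x by linarith [hx.2]) (q-1)]
    push_cast; ring
  rw [hlhs, hbeta] at hsc
  have : ((ε:ℂ)) ^ ((p:ℂ) + q - 1) = ((ε ^ (p + q - 1) : ℝ) : ℂ) := by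
    rw [Complex.ofReal_cpow hε.le]; push_cast; ring_nf
  rw [this] at hsc
  have hG : Complex.Gamma p * Complex.Gamma q / Complex.Gamma ((p:ℂ) + q) =
      ((Real.Gamma p * Real.Gamma q / Real.Gamma (p + q) : ℝ) : ℂ) := by
    rw [show ((p:ℂ) + q) = ((p + q : ℝ) : ℂ) by push_cast; ring]
    rw [Complex.Gamma_ofReal, Complex.Gamma_ofReal, Complex.Gamma_ofReal]
    push_cast; ring
  rw [hG, ← Complex.ofReal_mul] at hsc
  exact_mod_cast hsc

lemma layercake {sk ε : ℝ} (hs : 0 < sk) (hε : 0 < ε) {y : ℝ} (hy : 0 < y) :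
    (∫⁻ u in Set.Ioc (0:ℝ) ε,
      ({p : ℝ × ℝ | p.2 ≤ p.1}.indicator
        (fun p => ENNReal.ofReal (sk * (ε - p.1) ^ (sk - 1))) (u, y)) ∂volume)
      = ENNReal.ofReal (max (ε - y) 0 ^ sk) := by
  have hconv : ∀ u : ℝ, ({p : ℝ × ℝ | p.2 ≤ p.1}.indicator
        (fun p => ENNReal.ofReal (sk * (ε - p.1) ^ (sk - 1))) (u, y))
      = (Set.Ici y).indicator (fun u => ENNReal.ofReal (sk * (ε - u) ^ (sk - 1))) u := by
    intro u
    by_cases h : y ≤ u <;> simp [Set.indicator_apply, h]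
  simp_rw [hconv]
  rw [lintegral_indicator measurableSet_Ici, Measure.restrict_restrict measurableSet_Ici]
  rcases le_or_gt y ε with hyε | hyε
  · have hset : Set.Ici y ∩ Set.Ioc 0 ε = Set.Icc y ε := by
      ext u; constructor
      · rintro ⟨h1, _, h3⟩; exact ⟨h1, h3⟩
      · rintro ⟨h1, h2⟩; exact ⟨h1, lt_of_lt_of_le hy h1, h2⟩
    rw [hset, ← Measure.restrict_congr_set Ioc_ae_eq_Icc]
    have hint : IntegrableOn (fun u : ℝ => sk * (ε - u) ^ (sk - 1)) (Set.Ioc y ε) volume := by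
      have h1 : IntervalIntegrable (fun u : ℝ => (ε - u) ^ (sk - 1)) volume y ε := by
        have := (intervalIntegral.intervalIntegrable_rpow' (a := 0) (b := ε - y)
          (r := sk - 1) (by linarith)).comp_sub_left ε
        simpa [show ε - (ε - y) = y by ring] using this.symm
      exact (intervalIntegrable_iff_integrableOn_Ioc_of_le hyε).mp (h1.const_mul sk)
    have hnn : 0 ≤ᵐ[volume.restrict (Set.Ioc y ε)] fun u : ℝ => sk * (ε - u) ^ (sk - 1) := by
      refine (ae_restrict_iff' measurableSet_Ioc).mpr (ae_of_all _ fun u hu => ?_)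
      exact mul_nonneg hs.le (Real.rpow_nonneg (by linarith [hu.2]) _)
    rw [← ofReal_integral_eq_lintegral_ofReal hint hnn]
    congr 1
    rw [← intervalIntegral.integral_of_le hyε, intervalIntegral.integral_const_mul]
    have := intervalIntegral.integral_comp_sub_left (a := y) (b := ε)
      (fun x : ℝ => x ^ (sk - 1)) ε
    rw [this, sub_self, integral_rpow (Or.inl (by linarith))]
    rw [show sk - 1 + 1 = sk by ring, Real.zero_rpow hs.ne', max_eq_left (by linarith)]
    field_simp
    ring
  · have hset : Set.Ici y ∩ Set.Ioc 0 ε = ∅ := by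
      ext u; simp only [Set.mem_inter_iff, Set.mem_Ici, Set.mem_Ioc, Set.mem_empty_iff_false,
        iff_false, not_and]
      intro h1 h2 h3; linarith
    rw [hset, Measure.restrict_empty, lintegral_zero_measure]
    rw [max_eq_right (by linarith), Real.zero_rpow hs.ne', ENNReal.ofReal_zero]

lemma measurable_rpow_const (c : ℝ) : Measurable fun x : ℝ => x ^ c := by
  have h : ∀ x : ℝ, x ^ c = if x = 0 then (if c = 0 then 1 else 0) else
      (if 0 < x then Real.exp (Real.log x * c) else Real.exp (Real.log x * c) * Real.cos (c * Real.pi)) := by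
    intro x
    rcases lt_trichotomy x 0 with hx | hx | hx
    · rw [if_neg hx.ne, if_neg (not_lt.mpr hx.le), Real.rpow_def_of_neg hx, mul_comm c]
    · subst hx
      rcases eq_or_ne c 0 with rfl | hc
      · simp
      · simp [Real.zero_rpow hc, hc]
    · rw [if_neg hx.ne', if_pos hx, Real.rpow_def_of_pos hx]
  simp_rw [h]
  refine Measurable.ite (measurableSet_eq_fun measurable_id measurable_const) measurable_const ?_
  refine Measurable.ite (measurableSet_lt measurable_const measurable_id) ?_ ?_
  · exact (Real.measurable_log.mul_const c).exp
  · exact ((Real.measurable_log.mul_const c).exp).mul_const _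
set_option maxHeartbeats 1000000 in
lemma aux_main {Ω : Type*} [MeasureSpace Ω] [IsProbabilityMeasure (ℙ : Measure Ω)]
    {ν : ℕ} (Z : Fin ν → Ω → ℝ) (hZm : ∀ j, Measurable (Z j))
    (hpos : ∀ j, ∀ ω, 0 < Z j ω)
    (hindep : iIndepFun Z ℙ)
    {C b : ℝ} (hC : 0 < C) (hb0 : 0 < b) (hb1 : b < 1)
    (htail : ∀ j, ∀ ε : ℝ, 0 < ε → ℙ {ω | Z j ω ≤ ε} ≤ ENNReal.ofReal (C * ε ^ b))
    (s : Finset (Fin ν)) (hs : s.Nonempty) :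
    ∀ ε : ℝ, 0 < ε →
      ℙ {ω | ∑ j ∈ s, Z j ω ≤ ε} ≤
        ENNReal.ofReal (C ^ s.card * Real.Gamma (1 + b) ^ s.card /
          Real.Gamma (1 + b * s.card) * ε ^ (b * s.card)) := by
  induction hs using Finset.Nonempty.cons_induction with
  | singleton a =>
    intro ε hε
    have hG : 0 < Real.Gamma (1 + b) := Real.Gamma_pos_of_pos (by linarith)
    simp only [Finset.card_singleton, Finset.sum_singleton, Nat.cast_one, mul_one, pow_one]
    rw [mul_div_assoc, div_self hG.ne', mul_one]
    exact htail a ε hε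
  | cons a s ha hs IH =>
    intro ε hε
    set k := s.card with hk
    have hk1 : 1 ≤ k := hs.card_pos
    set sk : ℝ := b * k with hsk
    have hsk0 : 0 < sk := by
      have : (0:ℝ) < k := by exact_mod_cast hk1
      positivity
    set Ak : ℝ := C ^ k * Real.Gamma (1 + b) ^ k / Real.Gamma (1 + sk) with hAk
    have hGsk : 0 < Real.Gamma (1 + sk) := Real.Gamma_pos_of_pos (by linarith)
    have hAk0 : 0 ≤ Ak := by positivity
    set X : Ω → ℝ := fun ω => ∑ j ∈ s, Z j ω with hX
    set Y : Ω → ℝ := fun ω => Z a ω with hY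
    have hXm : Measurable X := by
      apply Finset.measurable_sum
      exact fun j _ => hZm j
    have hYm : Measurable Y := hZm a
    have hXpos : ∀ ω, 0 < X ω := fun ω => Finset.sum_pos (fun j _ => hpos j ω) hs
    -- independence
    have hXeq : X = ∑ j ∈ s, Z j := by funext ω; simp [hX]
    have hind : IndepFun Y X ℙ := by
      rw [hXeq]
      exact (iIndepFun.indepFun_finset_sum_of_notMem hindep hZm ha).symm
    have hprod := (indepFun_iff_map_prod_eq_prod_map_map hYm.aemeasurable hXm.aemeasurable).mp hind
    haveI : IsProbabilityMeasure ((Measure.map Y ℙ)) := Measure.isProbabilityMeasure_map hYm.aemeasurable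
    have hSm : MeasurableSet {p : ℝ × ℝ | p.1 + p.2 ≤ ε} :=
      measurableSet_le (measurable_fst.add measurable_snd) measurable_const
    -- step 1 : convolution formula
    have step1 : ℙ {ω | ∑ j ∈ Finset.cons a s ha, Z j ω ≤ ε}
        = ∫⁻ y, ((Measure.map X ℙ)) (Set.Iic (ε - y)) ∂((Measure.map Y ℙ)) := by
      have h1 : {ω | ∑ j ∈ Finset.cons a s ha, Z j ω ≤ ε}
          = (fun ω => (Y ω, X ω)) ⁻¹' {p : ℝ × ℝ | p.1 + p.2 ≤ ε} := by
        ext ω; simp [Finset.sum_cons, Finset.sum_insert ha, hX, hY]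
      rw [h1, ← Measure.map_apply (hYm.prodMk hXm) hSm, hprod, Measure.prod_apply hSm]
      congr 1
      ext y
      congr 1
      ext x
      simp only [Set.mem_preimage, Set.mem_setOf_eq, Set.mem_Iic]
      constructor <;> intro h <;> linarith
    -- step 2 : pointwise bound on the inner measure
    have step2 : ∀ y : ℝ, ((Measure.map X ℙ)) (Set.Iic (ε - y))
        ≤ ENNReal.ofReal Ak * ENNReal.ofReal (max (ε - y) 0 ^ sk) := by
      intro y
      rw [Measure.map_apply hXm measurableSet_Iic]
      rcases lt_or_ge y ε with hy | hy
      · have h := IH (ε - y) (by linarith)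
        rw [max_eq_left (by linarith)]
        calc ℙ (X ⁻¹' Set.Iic (ε - y)) ≤ ENNReal.ofReal (C ^ k * Real.Gamma (1 + b) ^ k /
              Real.Gamma (1 + b * k) * (ε - y) ^ (b * k)) := h
          _ = ENNReal.ofReal Ak * ENNReal.ofReal ((ε - y) ^ sk) := by
              rw [← ENNReal.ofReal_mul hAk0]
      · have hempty : X ⁻¹' Set.Iic (ε - y) = ∅ := by
          ext ω
          simp only [Set.mem_preimage, Set.mem_Iic, Set.mem_empty_iff_false, iff_false, not_le]
          linarith [hXpos ω]
        rw [hempty, measure_empty]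
        exact zero_le
    -- step 4: a.e. positivity of Y under its law
    have hYae : ∀ᵐ y ∂((Measure.map Y ℙ)), 0 < y := by
      rw [ae_iff]
      have : {y : ℝ | ¬ 0 < y} = Set.Iic 0 := by ext y; simp
      rw [this, Measure.map_apply hYm measurableSet_Iic]
      have : Y ⁻¹' Set.Iic (0:ℝ) = ∅ := by
        ext ω; simp only [Set.mem_preimage, Set.mem_Iic, Set.mem_empty_iff_false, iff_false, not_le]
        exact hpos a ω
      rw [this, measure_empty]
    -- the kernel function
    set g : ℝ × ℝ → ℝ≥0∞ := fun p =>
      ({p : ℝ × ℝ | p.2 ≤ p.1}.indicator (fun p => ENNReal.ofReal (sk * (ε - p.1) ^ (sk - 1)))) p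
      with hg
    have hgm : Measurable g := by
      refine Measurable.indicator ?_ (measurableSet_le measurable_snd measurable_fst)
      exact ENNReal.measurable_ofReal.comp
        (((measurable_rpow_const (sk - 1)).comp (measurable_const.sub measurable_fst)).const_mul sk)
    -- step 5: layer cake + swap
    have step5 : ∫⁻ y, ENNReal.ofReal (max (ε - y) 0 ^ sk) ∂((Measure.map Y ℙ))
        = ∫⁻ u in Set.Ioc (0:ℝ) ε, ∫⁻ y, g (u, y) ∂((Measure.map Y ℙ)) ∂volume := by
      have h1 : ∫⁻ y, ENNReal.ofReal (max (ε - y) 0 ^ sk) ∂((Measure.map Y ℙ))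
          = ∫⁻ y, (∫⁻ u in Set.Ioc (0:ℝ) ε, g (u, y) ∂volume) ∂((Measure.map Y ℙ)) := by
        refine lintegral_congr_ae ?_
        filter_upwards [hYae] with y hy
        rw [layercake hsk0 hε hy]
      rw [h1]
      exact lintegral_lintegral_swap ((hgm.comp measurable_swap).aemeasurable)
    -- step 6: compute the inner integral in y
    have step6 : ∀ u : ℝ, (∫⁻ y, g (u, y) ∂((Measure.map Y ℙ)))
        = ENNReal.ofReal (sk * (ε - u) ^ (sk - 1)) * ((Measure.map Y ℙ)) (Set.Iic u) := by
      intro u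
      have : ∀ y : ℝ, g (u, y) = (Set.Iic u).indicator
          (fun _ => ENNReal.ofReal (sk * (ε - u) ^ (sk - 1))) y := by
        intro y
        by_cases h : y ≤ u <;> simp [hg, Set.indicator_apply, h]
      simp_rw [this]
      rw [lintegral_indicator measurableSet_Iic, setLIntegral_const]
    -- step 7: bound by the tail hypothesis
    have step7 : ∫⁻ u in Set.Ioc (0:ℝ) ε, ∫⁻ y, g (u, y) ∂((Measure.map Y ℙ)) ∂volume
        ≤ ∫⁻ u in Set.Ioc (0:ℝ) ε,
            ENNReal.ofReal (sk * (ε - u) ^ (sk - 1) * (C * u ^ b)) ∂volume := by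
      refine setLIntegral_mono ?_ ?_
      · exact ENNReal.measurable_ofReal.comp
          ((((measurable_rpow_const (sk - 1)).comp (measurable_const.sub measurable_id)).const_mul
            sk).mul ((measurable_rpow_const b).const_mul C))
      · intro u hu
        rw [step6 u]
        have h1 : ((Measure.map Y ℙ)) (Set.Iic u) ≤ ENNReal.ofReal (C * u ^ b) := by
          rw [Measure.map_apply hYm measurableSet_Iic]
          exact htail a u hu.1
        calc ENNReal.ofReal (sk * (ε - u) ^ (sk - 1)) * ((Measure.map Y ℙ)) (Set.Iic u)
            ≤ ENNReal.ofReal (sk * (ε - u) ^ (sk - 1)) * ENNReal.ofReal (C * u ^ b) :=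
              mul_le_mul_right h1 _
          _ = ENNReal.ofReal (sk * (ε - u) ^ (sk - 1) * (C * u ^ b)) := by
              rw [← ENNReal.ofReal_mul
                (mul_nonneg hsk0.le (Real.rpow_nonneg (by linarith [hu.2]) _))]
    -- step 8: evaluate the beta-type integral
    have step8 : ∫⁻ u in Set.Ioc (0:ℝ) ε,
          ENNReal.ofReal (sk * (ε - u) ^ (sk - 1) * (C * u ^ b)) ∂volume
        = ENNReal.ofReal (sk * C *
            (ε ^ (b + 1 + sk - 1) * (Real.Gamma (b + 1) * Real.Gamma sk / Real.Gamma (b + 1 + sk)))) := by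
      have hint0 : IntervalIntegrable (fun x : ℝ => x ^ (b + 1 - 1) * (ε - x) ^ (sk - 1))
          volume 0 ε := betaIntegrable (by linarith) hsk0 hε
      have hint : IntegrableOn (fun u : ℝ => sk * (ε - u) ^ (sk - 1) * (C * u ^ b))
          (Set.Ioc 0 ε) volume := by
        have h2 : IntervalIntegrable (fun u : ℝ => sk * (ε - u) ^ (sk - 1) * (C * u ^ b))
            volume 0 ε := by
          have hfeq : (fun u : ℝ => sk * (ε - u) ^ (sk - 1) * (C * u ^ b))
              = fun u : ℝ => (sk * C) * (u ^ (b + 1 - 1) * (ε - u) ^ (sk - 1)) := by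
            funext u
            rw [show b + 1 - 1 = b by ring]
            ring
          rw [hfeq]
          exact hint0.const_mul (sk * C)
        exact (intervalIntegrable_iff_integrableOn_Ioc_of_le hε.le).mp h2
      have hnn : 0 ≤ᵐ[volume.restrict (Set.Ioc (0:ℝ) ε)]
          fun u : ℝ => sk * (ε - u) ^ (sk - 1) * (C * u ^ b) := by
        refine (ae_restrict_iff' measurableSet_Ioc).mpr (ae_of_all _ fun u hu => ?_)
        have := Real.rpow_nonneg (show (0:ℝ) ≤ ε - u by linarith [hu.2]) (sk - 1)
        have := Real.rpow_nonneg hu.1.le b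
        positivity
      rw [← ofReal_integral_eq_lintegral_ofReal hint hnn]
      congr 1
      rw [← intervalIntegral.integral_of_le hε.le]
      have hcong : ∀ u ∈ Set.uIcc (0:ℝ) ε,
          sk * (ε - u) ^ (sk - 1) * (C * u ^ b)
            = (sk * C) * (u ^ (b + 1 - 1) * (ε - u) ^ (sk - 1)) := by
        intro u hu
        have : b + 1 - 1 = b := by ring
        rw [this]; ring
      rw [intervalIntegral.integral_congr hcong, intervalIntegral.integral_const_mul,
        betaValue (by linarith) hsk0 hε]
    -- put everything together
    calc ℙ {ω | ∑ j ∈ Finset.cons a s ha, Z j ω ≤ ε}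
        = ∫⁻ y, ((Measure.map X ℙ)) (Set.Iic (ε - y)) ∂((Measure.map Y ℙ)) := step1
      _ ≤ ∫⁻ y, ENNReal.ofReal Ak * ENNReal.ofReal (max (ε - y) 0 ^ sk) ∂((Measure.map Y ℙ)) :=
          lintegral_mono step2
      _ = ENNReal.ofReal Ak * ∫⁻ y, ENNReal.ofReal (max (ε - y) 0 ^ sk) ∂((Measure.map Y ℙ)) := by
          rw [lintegral_const_mul]
          exact ENNReal.measurable_ofReal.comp ((measurable_rpow_const sk).comp
            ((measurable_const.sub measurable_id).max measurable_const))
      _ = ENNReal.ofReal Ak *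
            ∫⁻ u in Set.Ioc (0:ℝ) ε, ∫⁻ y, g (u, y) ∂((Measure.map Y ℙ)) ∂volume := by rw [step5]
      _ ≤ ENNReal.ofReal Ak * ENNReal.ofReal (sk * C *
            (ε ^ (b + 1 + sk - 1) * (Real.Gamma (b + 1) * Real.Gamma sk / Real.Gamma (b + 1 + sk)))) := by
          exact mul_le_mul_right (le_trans step7 (le_of_eq step8)) _
      _ = ENNReal.ofReal (C ^ (Finset.cons a s ha).card *
            Real.Gamma (1 + b) ^ (Finset.cons a s ha).card /
            Real.Gamma (1 + b * (Finset.cons a s ha).card) *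
            ε ^ (b * (Finset.cons a s ha).card)) := by
          rw [← ENNReal.ofReal_mul hAk0]
          congr 1
          rw [Finset.card_cons]
          have hGsk' : 0 < Real.Gamma sk := Real.Gamma_pos_of_pos hsk0
          have hGb1 : 0 < Real.Gamma (b + 1 + sk) := Real.Gamma_pos_of_pos (by linarith)
          have e1 : Real.Gamma (1 + sk) = sk * Real.Gamma sk := by
            rw [add_comm, Real.Gamma_add_one hsk0.ne']
          have e2 : (1 : ℝ) + b * ((k + 1 : ℕ) : ℝ) = b + 1 + sk := by push_cast; rw [hsk]; ring
          have e3 : b * ((k + 1 : ℕ) : ℝ) = b + 1 + sk - 1 := by push_cast; rw [hsk]; ring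
          have e4 : Real.Gamma (b + 1) = Real.Gamma (1 + b) := by rw [add_comm]
          rw [e2, e3, hAk, e1, e4]
          field_simp
          ring
    done


/-- Lemma 12, anti-concentration: if `Z₁,…,Z_ν` are independent positive
random variables with `P(Zⱼ ≤ ε) ≤ C ε^b` for all `ε > 0`, then
`P(Σⱼ Zⱼ ≤ ε) ≤ ν⁻¹ Γ(b) (Γ(1+b)^{ν−1}/Γ(bν)) (C ε^b)^ν`. -/
theorem statement19 {Ω : Type*} [MeasureSpace Ω] [IsProbabilityMeasure (ℙ : Measure Ω)]
    {ν : ℕ} (hν : 1 ≤ ν) (Z : Fin ν → Ω → ℝ) (hZm : ∀ j, Measurable (Z j))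
    (hpos : ∀ j, ∀ ω, 0 < Z j ω)
    (hindep : iIndepFun Z ℙ)
    {C b : ℝ} (hC : 0 < C) (hb0 : 0 < b) (hb1 : b < 1)
    (htail : ∀ j, ∀ ε : ℝ, 0 < ε → ℙ {ω | Z j ω ≤ ε} ≤ ENNReal.ofReal (C * ε ^ b))
    {ε : ℝ} (hε : 0 < ε) :
    ℙ {ω | ∑ j, Z j ω ≤ ε} ≤
      ENNReal.ofReal ((ν : ℝ)⁻¹ * Real.Gamma b *
        (Real.Gamma (1 + b) ^ (ν - 1) / Real.Gamma (b * ν)) * (C * ε ^ b) ^ ν) := by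
  haveI : Nonempty (Fin ν) := ⟨⟨0, hν⟩⟩
  have h := aux_main Z hZm hpos hindep hC hb0 hb1 htail Finset.univ Finset.univ_nonempty ε hε
  rw [Finset.card_univ, Fintype.card_fin] at h
  refine le_trans h (le_of_eq ?_)
  congr 1
  have hν' : (0:ℝ) < ν := by exact_mod_cast hν
  have hGbν : 0 < Real.Gamma (b * ν) := Real.Gamma_pos_of_pos (by positivity)
  have hGb : 0 < Real.Gamma b := Real.Gamma_pos_of_pos hb0
  have e1 : Real.Gamma (1 + b * ν) = (b * ν) * Real.Gamma (b * ν) := by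
    rw [add_comm, Real.Gamma_add_one (by positivity)]
  have e2 : Real.Gamma (1 + b) = b * Real.Gamma b := by
    rw [add_comm, Real.Gamma_add_one hb0.ne']
  have e3 : (C * ε ^ b) ^ ν = C ^ ν * ε ^ (b * (ν:ℝ)) := by
    rw [mul_pow, ← Real.rpow_natCast (ε ^ b) ν, ← Real.rpow_mul hε.le]
  have e4 : Real.Gamma (1 + b) ^ ν = Real.Gamma (1 + b) ^ (ν - 1) * Real.Gamma (1 + b) := by
    rw [← pow_succ, Nat.sub_add_cancel hν]
  rw [e3, e4, e2, e1]
  field_simp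
end
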